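/- arXiv:1609.05846 — 2 statements merged into one kernel-verified Lean document; each statement's English description precedes it below -/
import Mathlib

section
/- Let (S, n) be a local ring and I ⊆ J ideals of S. The open subset Spec(S/I) \ V(J) is disconnected if and only if there exist ideals a and b of S with √(a ∩ b) = √I, √(a + b) = √J, and neither √a = √J nor √b = √J. -/
section Aux
variable {S : Type*} [CommRing S] (I : Ideal S)

/-- zero locus in `Spec (S ⧸ I)` of the image of an ideal of `S`. -/
def auxZ (a : Ideal S) : Set (PrimeSpectrum (S ⧸ I)) :=
  PrimeSpectrum.zeroLocus ((a.map (Ideal.Quotient.mk I) : Ideal (S ⧸ I)) : Set (S ⧸ I))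

variable {I}

lemma mem_auxZ {a : Ideal S} {p : PrimeSpectrum (S ⧸ I)} :
    p ∈ auxZ I a ↔ a ≤ p.asIdeal.comap (Ideal.Quotient.mk I) := by
  rw [auxZ, PrimeSpectrum.mem_zeroLocus, SetLike.coe_subset_coe,
    Ideal.map_le_iff_le_comap]

lemma auxZ_inf (a b : Ideal S) : auxZ I (a ⊓ b) = auxZ I a ∪ auxZ I b := by
  ext p
  simp only [Set.mem_union, mem_auxZ]
  constructor
  · intro h
    exact (Ideal.IsPrime.inf_le inferInstance).mp h
  · rintro (h | h)
    · exact le_trans inf_le_left h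
    · exact le_trans inf_le_right h

lemma auxZ_add (a b : Ideal S) : auxZ I (a + b) = auxZ I a ∩ auxZ I b := by
  ext p
  simp only [Set.mem_inter_iff, mem_auxZ, Ideal.add_eq_sup, sup_le_iff]

lemma auxZ_anti {a b : Ideal S} (h : a.radical ≤ b.radical) : auxZ I b ⊆ auxZ I a := by
  intro p hp
  rw [mem_auxZ] at hp ⊢
  have : b.radical ≤ p.asIdeal.comap (Ideal.Quotient.mk I) :=
    ((Ideal.IsPrime.radical_le_iff inferInstance).mpr hp)
  exact le_trans Ideal.le_radical (le_trans h this)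

lemma radical_le_of_auxZ_subset {a b : Ideal S} (hb : I ≤ b.radical)
    (h : auxZ I b ⊆ auxZ I a) : a.radical ≤ b.radical := by
  rw [Ideal.radical_eq_sInf b]
  refine le_sInf ?_
  rintro P ⟨hbP, hP⟩
  have hIP : I ≤ P := le_trans hb ((Ideal.IsPrime.radical_le_iff hP).mpr hbP)
  have hker : RingHom.ker (Ideal.Quotient.mk I) ≤ P := by rwa [Ideal.mk_ker]
  have hPrime : (P.map (Ideal.Quotient.mk I)).IsPrime :=
    Ideal.map_isPrime_of_surjective Ideal.Quotient.mk_surjective hker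
  set p : PrimeSpectrum (S ⧸ I) := ⟨P.map (Ideal.Quotient.mk I), hPrime⟩
  have hcomap : p.asIdeal.comap (Ideal.Quotient.mk I) = P := by
    rw [Ideal.comap_map_of_surjective _ Ideal.Quotient.mk_surjective]
    rw [← RingHom.ker, Ideal.mk_ker]
    exact sup_eq_left.mpr hIP
  have hpb : p ∈ auxZ I b := by rw [mem_auxZ, hcomap]; exact hbP
  have hpa := h hpb
  rw [mem_auxZ, hcomap] at hpa
  exact (Ideal.IsPrime.radical_le_iff hP).mpr hpa

lemma auxZ_eq_iff {a b : Ideal S} (ha : I ≤ a.radical) (hb : I ≤ b.radical) :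
    auxZ I a = auxZ I b ↔ a.radical = b.radical := by
  constructor
  · intro h
    exact le_antisymm (radical_le_of_auxZ_subset hb (h ▸ subset_refl _))
      (radical_le_of_auxZ_subset ha (h ▸ subset_refl _))
  · intro h
    exact le_antisymm (auxZ_anti h.ge) (auxZ_anti h.le)

end Aux

lemma I_le_comap_aux {S : Type*} [CommRing S] {I : Ideal S} (p : Ideal (S ⧸ I)) :
    I ≤ p.comap (Ideal.Quotient.mk I) := fun x hx => by
  simp [Ideal.mem_comap, Ideal.Quotient.eq_zero_iff_mem.mpr hx]

lemma auxZ_self {S : Type*} [CommRing S] (I : Ideal S) : auxZ I I = Set.univ := by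
  ext p
  simp only [Set.mem_univ, iff_true, mem_auxZ]
  exact I_le_comap_aux _

open IsLocalRing

/-- Let `(S, n)` be a local ring and `I ⊆ J` ideals of `S`.  The open subset
`Spec(S/I) \ V(J)` is disconnected if and only if there exist ideals `a`, `b` of `S` with
`√(a ∩ b) = √I`, `√(a + b) = √J`, and neither `√a = √J` nor `√b = √J`.
(Here "connected" means: not the union of two disjoint nonempty open sets, i.e.
preconnected.) -/
theorem stmt2 {S : Type*} [CommRing S] [IsNoetherianRing S] [IsLocalRing S]
    (I J : Ideal S) (hIJ : I ≤ J) :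
    ¬ IsPreconnected
        ((PrimeSpectrum.zeroLocus
            ((J.map (Ideal.Quotient.mk I) : Ideal (S ⧸ I)) : Set (S ⧸ I)))ᶜ :
          Set (PrimeSpectrum (S ⧸ I))) ↔
      ∃ a b : Ideal S,
        (a ⊓ b).radical = I.radical ∧ (a + b).radical = J.radical ∧
        a.radical ≠ J.radical ∧ b.radical ≠ J.radical := by
  show ¬ IsPreconnected ((auxZ I J)ᶜ) ↔ _
  set s : Set (PrimeSpectrum (S ⧸ I)) := (auxZ I J)ᶜ with hs
  have hIJrad : I ≤ J.radical := le_trans hIJ Ideal.le_radical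
  constructor
  · -- disconnected ⇒ ideals
    intro h
    simp only [IsPreconnected, not_forall] at h
    obtain ⟨u, v, hu, hv, hcover, hune, hvne, hempty⟩ := h
    rw [Set.not_nonempty_iff_eq_empty] at hempty
    set A : Set (PrimeSpectrum (S ⧸ I)) := s ∩ u with hA
    set B : Set (PrimeSpectrum (S ⧸ I)) := s ∩ v with hB
    set a₀ : Ideal S := (PrimeSpectrum.vanishingIdeal A).comap (Ideal.Quotient.mk I) with ha₀
    set b₀ : Ideal S := (PrimeSpectrum.vanishingIdeal B).comap (Ideal.Quotient.mk I) with hb₀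
    have hZa₀ : auxZ I a₀ = closure A := by
      rw [auxZ, ha₀, Ideal.map_comap_of_surjective _ Ideal.Quotient.mk_surjective,
        PrimeSpectrum.zeroLocus_vanishingIdeal_eq_closure]
    have hZb₀ : auxZ I b₀ = closure B := by
      rw [auxZ, hb₀, Ideal.map_comap_of_surjective _ Ideal.Quotient.mk_surjective,
        PrimeSpectrum.zeroLocus_vanishingIdeal_eq_closure]
    have hIa₀ : I ≤ a₀ := I_le_comap_aux _
    have hIb₀ : I ≤ b₀ := I_le_comap_aux _
    have hAv : A ⊆ vᶜ := by
      intro p hp hpv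
      exact Set.eq_empty_iff_forall_notMem.mp hempty p ⟨hp.1, hp.2, hpv⟩
    have hBu : B ⊆ uᶜ := by
      intro p hp hpu
      exact Set.eq_empty_iff_forall_notMem.mp hempty p ⟨hp.1, hpu, hp.2⟩
    have hclAv : closure A ⊆ vᶜ := closure_minimal hAv hv.isClosed_compl
    have hclBu : closure B ⊆ uᶜ := closure_minimal hBu hu.isClosed_compl
    have hZa : auxZ I (a₀ ⊓ J) = closure A ∪ auxZ I J := by rw [auxZ_inf, hZa₀]
    have hZb : auxZ I (b₀ ⊓ J) = closure B ∪ auxZ I J := by rw [auxZ_inf, hZb₀]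
    have hIa : I ≤ (a₀ ⊓ J).radical := le_trans (le_inf hIa₀ hIJ) Ideal.le_radical
    have hIb : I ≤ (b₀ ⊓ J).radical := le_trans (le_inf hIb₀ hIJ) Ideal.le_radical
    refine ⟨a₀ ⊓ J, b₀ ⊓ J, ?_, ?_, ?_, ?_⟩
    · refine (auxZ_eq_iff (le_trans (le_inf (le_inf hIa₀ hIJ) (le_inf hIb₀ hIJ))
        Ideal.le_radical) Ideal.le_radical).mp ?_
      rw [auxZ_inf, hZa, hZb, auxZ_self]
      ext p
      simp only [Set.mem_union, Set.mem_univ, iff_true]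
      by_cases hpJ : p ∈ auxZ I J
      · exact Or.inl (Or.inr hpJ)
      · rcases hcover hpJ with hpu | hpv
        · exact Or.inl (Or.inl (subset_closure ⟨hpJ, hpu⟩))
        · exact Or.inr (Or.inl (subset_closure ⟨hpJ, hpv⟩))
    · refine (auxZ_eq_iff (le_trans hIa (Ideal.radical_mono le_sup_left)) hIJrad).mp ?_
      rw [← Ideal.add_eq_sup, auxZ_add, hZa, hZb]
      apply Set.Subset.antisymm
      · rintro p ⟨hp1, hp2⟩
        rcases hp1 with hp1 | hp1
        · rcases hp2 with hp2 | hp2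
          · by_cases hpJ : p ∈ auxZ I J
            · exact hpJ
            · exfalso
              rcases hcover hpJ with hpu | hpv
              · exact hclBu hp2 hpu
              · exact hclAv hp1 hpv
          · exact hp2
        · exact hp1
      · exact fun p hp => ⟨Or.inr hp, Or.inr hp⟩
    · intro heq
      obtain ⟨p, hp⟩ := hune
      have : p ∈ auxZ I J := by
        rw [← (auxZ_eq_iff hIa hIJrad).mpr heq, hZa]
        exact Or.inl (subset_closure hp)
      exact hp.1 this
    · intro heq
      obtain ⟨p, hp⟩ := hvne
      have : p ∈ auxZ I J := by
        rw [← (auxZ_eq_iff hIb hIJrad).mpr heq, hZb]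
        exact Or.inl (subset_closure hp)
      exact hp.1 this
  · -- ideals ⇒ disconnected
    rintro ⟨a, b, h1, h2, h3, h4⟩ hpc
    have hIa : I ≤ a.radical :=
      le_trans Ideal.le_radical (h1 ▸ Ideal.radical_mono inf_le_left)
    have hIb : I ≤ b.radical :=
      le_trans Ideal.le_radical (h1 ▸ Ideal.radical_mono inf_le_right)
    have hab : auxZ I (a + b) ⊆ auxZ I J := auxZ_anti h2.ge
    have hcover : s ⊆ (auxZ I b)ᶜ ∪ (auxZ I a)ᶜ := by
      intro p hp
      by_contra hc
      simp only [Set.mem_union, Set.mem_compl_iff, not_or, not_not] at hc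
      exact hp (hab (by rw [auxZ_add]; exact ⟨hc.2, hc.1⟩))
    have hIinf : I ≤ (a ⊓ b).radical := by rw [h1]; exact Ideal.le_radical
    have hZab : auxZ I (a ⊓ b) = Set.univ := by
      rw [← auxZ_self I]
      exact (auxZ_eq_iff hIinf Ideal.le_radical).mpr (by rw [h1])
    have hopen : ∀ c : Ideal S, IsOpen ((auxZ I c)ᶜ) := fun c =>
      (PrimeSpectrum.isClosed_zeroLocus _).isOpen_compl
    -- nonemptiness of the two pieces
    have hne : ∀ c d : Ideal S, I ≤ c.radical → c.radical ≠ J.radical →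
        (c + d).radical = J.radical → s ⊆ auxZ I d → False := by
      intro c d hIc hcJ hcd hsub
      apply hcJ
      rw [← auxZ_eq_iff hIc hIJrad]
      apply Set.Subset.antisymm
      · intro p hp
        by_contra hpJ
        have hps : p ∈ s := hpJ
        have hpd : p ∈ auxZ I d := hsub hps
        have : p ∈ auxZ I (c + d) := by rw [auxZ_add]; exact ⟨hp, hpd⟩
        exact hpJ (auxZ_anti hcd.ge this)
      · exact auxZ_anti (by rw [← hcd]; exact Ideal.radical_mono le_sup_left)
    have h1' : (s ∩ (auxZ I b)ᶜ).Nonempty := by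
      rw [Set.nonempty_iff_ne_empty]
      intro hc
      refine hne a b hIa h3 h2 (fun p hp => ?_)
      by_contra hpb
      exact Set.eq_empty_iff_forall_notMem.mp hc p ⟨hp, hpb⟩
    have h2' : (s ∩ (auxZ I a)ᶜ).Nonempty := by
      rw [Set.nonempty_iff_ne_empty]
      intro hc
      refine hne b a hIb h4 (by rwa [add_comm]) (fun p hp => ?_)
      by_contra hpa
      exact Set.eq_empty_iff_forall_notMem.mp hc p ⟨hp, hpa⟩
    obtain ⟨p, hps, hpb, hpa⟩ := hpc _ _ (hopen b) (hopen a) hcover h1' h2'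
    have : p ∈ auxZ I a ∪ auxZ I b := by
      rw [← auxZ_inf, hZab]; trivial
    rcases this with h | h
    · exact hpa h
    · exact hpb h
end

section
/- Let R be a complete local ring with minimal primes p_1, …, p_t, and let Θ_R be the graph on vertices 1, …, t with an edge between distinct i and j exactly when p_i + p_j is not primary to the maximal ideal. Then Θ_R is connected if and only if the punctured spectrum Spec(R) \ {m} is a connected topological space. -/
open IsLocalRing

/-- The graph `Θ_R` of a local ring `R`: vertices are the minimal primes of `R`, and two
distinct minimal primes `p`, `q` are joined by an edge exactly when `p + q` is not primary
to the maximal ideal, i.e. `√(p + q) ≠ m`. -/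
def thetaGraph (R : Type*) [CommRing R] [IsLocalRing R] :
    SimpleGraph {p : Ideal R // p ∈ minimalPrimes R} where
  Adj p q := p ≠ q ∧ (p.1 + q.1).radical ≠ maximalIdeal R
  symm := by
    constructor
    intro p q h
    exact ⟨h.1.symm, by rw [add_comm]; exact h.2⟩
  loopless := by
    constructor
    intro p h
    exact h.1 rfl

/-! The punctured spectrum `Spec° R` is covered by the finitely many sets `V(pᵢ) ∩ Spec° R`,
which are closed in it and connected, being the closure in `Spec° R` of the generic point `pᵢ`.
Two of them meet iff some prime `P ≠ m` contains `pᵢ + pⱼ`, i.e. iff `√(pᵢ + pⱼ) ≠ m`; so `Θ_R`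
is the intersection graph of this cover, and a finite closed cover by connected pieces is
connected iff its intersection graph is. -/

open Relation PrimeSpectrum

theorem SimpleGraph.reachable_iff_reflTransGen_of_adj_iff {V : Type*} {G : SimpleGraph V}
    {r : V → V → Prop} (hadj : ∀ u v, G.Adj u v ↔ u ≠ v ∧ r u v) (u v : V) :
    G.Reachable u v ↔ ReflTransGen r u v := by
  rw [reachable_iff_reflTransGen]
  refine ⟨ReflTransGen.mono (fun a b hab => ((hadj a b).1 hab).2) u v,
    ReflTransGen.lift' id (fun a b hab => ?_) u v⟩
  by_cases hab' : a = b
  · subst hab'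
    exact ReflTransGen.refl
  · exact ReflTransGen.single ((hadj a b).2 ⟨hab', hab⟩)

section ClosedCover

variable {X ι : Type*} [TopologicalSpace X] {s : Set X} {C : ι → Set X}

theorem IsPreconnected.reflTransGen_of_isClosed_cover [Finite ι] (hs : IsPreconnected s)
    (hC : ∀ i, IsClosed (C i)) (hcover : s ⊆ ⋃ i, C i) (hne : ∀ i, (s ∩ C i).Nonempty)
    (i j : ι) : ReflTransGen (fun i j => (s ∩ C i ∩ (s ∩ C j)).Nonempty) i j := by
  set r : ι → ι → Prop := fun i j => (s ∩ C i ∩ (s ∩ C j)).Nonempty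
  set A := ⋃ k ∈ {k | ReflTransGen r i k}, C k
  set B := ⋃ k ∈ {k | ¬ ReflTransGen r i k}, C k
  by_contra hij
  have hsAB : s ⊆ A ∪ B := fun x hx => by
    obtain ⟨k, hk⟩ := Set.mem_iUnion.1 (hcover hx)
    by_cases hik : ReflTransGen r i k
    · exact Or.inl (Set.mem_biUnion hik hk)
    · exact Or.inr (Set.mem_biUnion hik hk)
  have hsA : (s ∩ A).Nonempty :=
    (hne i).mono (Set.inter_subset_inter_right s (Set.subset_biUnion_of_mem ReflTransGen.refl))
  have hsB : (s ∩ B).Nonempty :=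
    (hne j).mono (Set.inter_subset_inter_right s (Set.subset_biUnion_of_mem (u := C) hij))
  obtain ⟨x, hxs, hxA, hxB⟩ := isPreconnected_closed_iff.1 hs A B
    ((Set.toFinite _).isClosed_biUnion fun k _ => hC k)
    ((Set.toFinite _).isClosed_biUnion fun k _ => hC k) hsAB hsA hsB
  obtain ⟨k, hik, hxk⟩ := Set.mem_iUnion₂.1 hxA
  obtain ⟨l, hil, hxl⟩ := Set.mem_iUnion₂.1 hxB
  exact hil (hik.tail ⟨x, ⟨hxs, hxk⟩, hxs, hxl⟩)

theorem isPreconnected_iff_reflTransGen_of_isClosed_cover [Finite ι]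
    (hC : ∀ i, IsClosed (C i)) (hcover : s ⊆ ⋃ i, C i) (hpre : ∀ i, IsPreconnected (s ∩ C i))
    (hne : ∀ i, (s ∩ C i).Nonempty) :
    IsPreconnected s ↔ ∀ i j, ReflTransGen (fun i j => (s ∩ C i ∩ (s ∩ C j)).Nonempty) i j := by
  refine ⟨fun hs => hs.reflTransGen_of_isClosed_cover hC hcover hne, fun h => ?_⟩
  have hs : s = ⋃ i, s ∩ C i := by rwa [← Set.inter_iUnion, Set.left_eq_inter]
  rw [hs]
  exact IsPreconnected.iUnion_of_reflTransGen hpre h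

end ClosedCover

namespace IsLocalRing

variable (R : Type*) [CommRing R] [IsLocalRing R]

def puncturedSpectrum : Set (PrimeSpectrum R) := {P | P.asIdeal ≠ maximalIdeal R}

variable {R}

theorem puncturedSpectrum_inter_zeroLocus_nonempty_iff {I : Ideal R} (hI : I ≠ ⊤) :
    (puncturedSpectrum R ∩ zeroLocus I).Nonempty ↔ I.radical ≠ maximalIdeal R := by
  constructor
  · rintro ⟨P, hPm, hIP⟩ hrad
    refine hPm (le_antisymm (le_maximalIdeal P.2.ne_top) ?_)
    exact hrad ▸ P.2.radical_le_iff.2 hIP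
  · intro hrad
    by_contra hempty
    refine hrad (le_antisymm ((maximalIdeal.isMaximal R).isPrime.radical_le_iff.2
      (le_maximalIdeal hI)) ?_)
    rw [Ideal.radical_eq_sInf]
    refine le_sInf fun J ⟨hIJ, hJ⟩ => ?_
    by_contra hmJ
    exact hempty ⟨⟨J, hJ⟩, fun hJm => hmJ hJm.ge, hIJ⟩

theorem isPreconnected_puncturedSpectrum_inter_zeroLocus {p : Ideal R} [hp : p.IsPrime]
    (hpm : p ≠ maximalIdeal R) : IsPreconnected (puncturedSpectrum R ∩ zeroLocus p) := by
  refine (isPreconnected_singleton (x := (⟨p, hp⟩ : PrimeSpectrum R))).subset_closure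
    (Set.singleton_subset_iff.2 ⟨hpm, Set.Subset.rfl⟩) fun P hP => ?_
  rw [PrimeSpectrum.closure_singleton]
  exact hP.2

theorem inter_zeroLocus_inter_inter_zeroLocus (I J : Ideal R) :
    puncturedSpectrum R ∩ zeroLocus I ∩ (puncturedSpectrum R ∩ zeroLocus J) =
      puncturedSpectrum R ∩ zeroLocus ↑(I + J) := by
  rw [Submodule.add_eq_sup, zeroLocus_sup, ← Set.inter_inter_distrib_left]

theorem eq_maximalIdeal_of_maximalIdeal_mem_minimalPrimes
    (hm : maximalIdeal R ∈ minimalPrimes R) (P : Ideal R) [hP : P.IsPrime] :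
    P = maximalIdeal R :=
  le_antisymm (le_maximalIdeal hP.ne_top) (hm.2 ⟨hP, bot_le⟩ (le_maximalIdeal hP.ne_top))

end IsLocalRing

theorem PrimeSpectrum.iUnion_zeroLocus_minimalPrimes (R : Type*) [CommRing R] :
    ⋃ p : {p : Ideal R // p ∈ minimalPrimes R}, zeroLocus (p.1 : Set R) = Set.univ :=
  Set.iUnion_eq_univ_iff.2 fun P =>
    let ⟨p, hp, hpP⟩ := Ideal.exists_minimalPrimes_le (J := P.asIdeal) bot_le
    ⟨⟨p, hp⟩, hpP⟩

theorem thetaGraph_adj_iff {R : Type*} [CommRing R] [IsLocalRing R]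
    (p q : {p : Ideal R // p ∈ minimalPrimes R}) :
    (thetaGraph R).Adj p q ↔ p ≠ q ∧
      (puncturedSpectrum R ∩ zeroLocus p.1 ∩ (puncturedSpectrum R ∩ zeroLocus q.1)).Nonempty := by
  have hpq : p.1 + q.1 ≠ ⊤ := ne_top_of_le_ne_top (maximalIdeal.isMaximal R).ne_top
    (add_le (le_maximalIdeal p.2.1.1.ne_top) (le_maximalIdeal q.2.1.1.ne_top))
  rw [inter_zeroLocus_inter_inter_zeroLocus, puncturedSpectrum_inter_zeroLocus_nonempty_iff hpq]
  rfl

theorem stmt5_general {R : Type*} [CommRing R] [IsNoetherianRing R] [IsLocalRing R] :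
    (thetaGraph R).Connected ↔
      IsPreconnected {P : PrimeSpectrum R | P.asIdeal ≠ maximalIdeal R} := by
  change _ ↔ IsPreconnected (puncturedSpectrum R)
  have : Nonempty {p : Ideal R // p ∈ minimalPrimes R} :=
    Ideal.nonempty_minimalPrimes bot_ne_top
  by_cases hm : maximalIdeal R ∈ minimalPrimes R
  · -- `m` is then the only prime: `Θ_R` is a single vertex and `Spec° R` is empty.
    have hmax := eq_maximalIdeal_of_maximalIdeal_mem_minimalPrimes hm
    have : Subsingleton {p : Ideal R // p ∈ minimalPrimes R} :=
      ⟨fun p q => Subtype.ext ((hmax p.1 (hP := p.2.1.1)).trans (hmax q.1 (hP := q.2.1.1)).symm)⟩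
    have hempty : puncturedSpectrum R = ∅ :=
      Set.eq_empty_of_forall_notMem fun P hP => hP (hmax P.asIdeal)
    exact iff_of_true .of_subsingleton (hempty ▸ isPreconnected_empty)
  · have hne : ∀ p : {p : Ideal R // p ∈ minimalPrimes R}, p.1 ≠ maximalIdeal R :=
      fun p h => hm (h ▸ p.2)
    have : Finite {p : Ideal R // p ∈ minimalPrimes R} :=
      (minimalPrimes.finite_of_isNoetherianRing R).to_subtype
    rw [SimpleGraph.connected_iff, and_iff_left ‹_›,
      isPreconnected_iff_reflTransGen_of_isClosed_cover (fun p => isClosed_zeroLocus _)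
      ((iUnion_zeroLocus_minimalPrimes R).symm ▸ Set.subset_univ _)
      (fun p => isPreconnected_puncturedSpectrum_inter_zeroLocus (hp := p.2.1.1) (hne p))
      (fun p => ⟨⟨p.1, p.2.1.1⟩, hne p, Set.Subset.rfl⟩)]
    exact forall₂_congr fun p q =>
      SimpleGraph.reachable_iff_reflTransGen_of_adj_iff thetaGraph_adj_iff p q

/-- Let `R` be a complete local ring.  The graph `Θ_R` is connected if and
only if the punctured spectrum `Spec R \ {m}` is a connected topological space (in the sense
that it is not the union of two disjoint nonempty open subsets). -/
theorem stmt5 {R : Type*} [CommRing R] [IsNoetherianRing R] [IsLocalRing R]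
    [IsAdicComplete (maximalIdeal R) R] :
    (thetaGraph R).Connected ↔
      IsPreconnected {P : PrimeSpectrum R | P.asIdeal ≠ maximalIdeal R} :=
  stmt5_general
end
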